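/- arXiv:2404.09057 — 3 statements merged into one kernel-verified Lean document; each statement's English description precedes it below -/
import Mathlib

section
/- For every n ≥ 1, the anti-diagonal sum of the Delannoy array equals the n-th Pell number: Σ_{j=0}^{n-1} d(n-1-j, j) = P(n), where the Pell numbers satisfy P(1) = 1, P(2) = 2, and P(n) = 2·P(n-1) + P(n-2) for n > 2. -/
/-- The Delannoy numbers. -/
def delannoy : ℕ → ℕ → ℕ
  | 0, _ => 1
  | _ + 1, 0 => 1
  | p + 1, q + 1 => delannoy p (q + 1) + delannoy (p + 1) q + delannoy p q

/-- The Pell numbers: `P 0 = 0`, `P 1 = 1`, `P (n+2) = 2·P (n+1) + P n`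
(so `P 2 = 2` and `P n = 2·P (n-1) + P (n-2)` for `n > 2`). -/
def pell : ℕ → ℕ
  | 0 => 0
  | 1 => 1
  | n + 2 => 2 * pell (n + 1) + pell n

/-!
Write `s m` for the sum of `d p q` over `p + q = m`. Peeling off the two boundary entries
(both equal to `1`) of the antidiagonal `m + 2` and expanding each interior entry
`d (p+1) (q+1)` by the recurrence gives the sum of the antidiagonal `m + 1` without its
lower boundary entry, the same without its upper boundary entry, and the antidiagonal `m`.
Hence `s (m + 2) = 2 s (m + 1) + s m`, the Pell recurrence, and `s 0 = 1 = P 1`, `s 1 = 2 = P 2`.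
-/

open Finset

@[simp]
lemma delannoy_zero_left (q : ℕ) : delannoy 0 q = 1 := by
  simp [delannoy]

@[simp]
lemma delannoy_zero_right (p : ℕ) : delannoy p 0 = 1 := by
  cases p <;> simp [delannoy]

lemma delannoy_succ_succ (p q : ℕ) :
    delannoy (p + 1) (q + 1) = delannoy p (q + 1) + delannoy (p + 1) q + delannoy p q := by
  simp [delannoy]

lemma sum_antidiagonal_delannoy_succ_succ (m : ℕ) :
    ∑ p ∈ antidiagonal (m + 2), delannoy p.1 p.2 =
      2 * ∑ p ∈ antidiagonal (m + 1), delannoy p.1 p.2 + ∑ p ∈ antidiagonal m, delannoy p.1 p.2 := by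
  have peel_both : ∑ p ∈ antidiagonal (m + 2), delannoy p.1 p.2 =
      2 + ∑ p ∈ antidiagonal m, delannoy (p.1 + 1) (p.2 + 1) := by
    rw [Nat.sum_antidiagonal_succ, Nat.sum_antidiagonal_succ']
    simp only [delannoy_zero_left, delannoy_zero_right]
    ring
  have peel_left : ∑ p ∈ antidiagonal (m + 1), delannoy p.1 p.2 =
      1 + ∑ p ∈ antidiagonal m, delannoy (p.1 + 1) p.2 := by
    simp [Nat.sum_antidiagonal_succ]
  have peel_right : ∑ p ∈ antidiagonal (m + 1), delannoy p.1 p.2 =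
      1 + ∑ p ∈ antidiagonal m, delannoy p.1 (p.2 + 1) := by
    simp [Nat.sum_antidiagonal_succ']
  rw [peel_both]
  simp only [delannoy_succ_succ, sum_add_distrib]
  omega

lemma sum_antidiagonal_delannoy_eq_pell (m : ℕ) :
    ∑ p ∈ antidiagonal m, delannoy p.1 p.2 = pell (m + 1) := by
  induction m using Nat.twoStepInduction with
  | zero => simp [pell]
  | one => simp [pell, Nat.sum_antidiagonal_succ]
  | more m ih₀ ih₁ =>
    rw [sum_antidiagonal_delannoy_succ_succ, ih₀, ih₁]
    rfl

theorem antidiagonal_sum_delannoy_eq_pell_general (n : ℕ) :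
    ∑ j ∈ Finset.range n, delannoy (n - 1 - j) j = pell n := by
  cases n with
  | zero => simp [pell]
  | succ m =>
    rw [← sum_antidiagonal_delannoy_eq_pell, ← Nat.sum_antidiagonal_swap]
    simp only [Prod.fst_swap, Prod.snd_swap]
    rw [Nat.sum_antidiagonal_eq_sum_range_succ (fun q p => delannoy p q)]
    simp

/-- For `n ≥ 1`, the `n`-th anti-diagonal sum of the Delannoy array is the
`n`-th Pell number. -/
theorem antidiagonal_sum_delannoy_eq_pell (n : ℕ) (hn : 1 ≤ n) :
    ∑ j ∈ Finset.range n, delannoy (n - 1 - j) j = pell n :=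
  antidiagonal_sum_delannoy_eq_pell_general n
end

section
/- Let t be the integer array with t(i,1) = 1, t(1,j) = g(j) (where g(1) = 1, g(2) = -2, g(3) = 2, g(4) = -10, and g(j) = -g(j-1) + 3g(j-2) - g(j-3) for j ≥ 5), and t(i,j) = t(i-1,j-1) + t(i-1,j) + t(i,j-1) for i,j ≥ 2. For every fixed n ≥ 1, let T_n(y) = Σ_{j≥1} t(n,j) y^{j-1} as a formal power series over ℚ. Then the following identity of formal power series holds: (1-y)^n · (1+2y-y²) · T_n(y) = (1+y)^n · (1-2y-y²). -/
/-!
The recurrence `t(i+1, j+1) - t(i+1, j) = t(i, j) + t(i, j+1)` together with `t(i+1, 1) = t(i, 1)`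
says exactly that `(1 - y) T_{i+1} = (1 + y) T_i`, so the identity for `n + 1` follows from the one
for `n`. For `n = 1`, the third-order recurrence of `g` (valid from `g 5` on) makes
`(1 - y)(1 + 2y - y²) = 1 + y - 3y² + y³` annihilate all but the first four coefficients of `T_1`.
-/

open PowerSeries

/-- First-row sequence: `g 1 = 1`, `g 2 = -2`, `g 3 = 2`, `g 4 = -10`, and
`g j = -g (j-1) + 3·g (j-2) - g (j-3)` for `j ≥ 5`. (`g 0` is a junk value.) -/
def gseq : ℕ → ℤ
  | 0 => 0
  | 1 => 1
  | 2 => -2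
  | 3 => 2
  | 4 => -10
  | j + 5 => -gseq (j + 4) + 3 * gseq (j + 3) - gseq (j + 2)

/-- The square array `t`: `t i 1 = 1` for `i ≥ 1`, `t 1 j = gseq j`, and
`t i j = t (i-1) (j-1) + t (i-1) j + t i (j-1)` for `i, j ≥ 2`.
(Values with a zero index are junk.) -/
def tarr : ℕ → ℕ → ℤ
  | _, 0 => 0
  | _, 1 => 1
  | 0, _ => 0
  | 1, j => gseq j
  | i + 2, j + 2 => tarr (i + 1) (j + 1) + tarr (i + 1) (j + 2) + tarr (i + 2) (j + 1)

theorem one_sub_X_mul_mk_eq_one_add_X_mul_mk {R : Type*} [CommRing R] {a b : ℕ → R}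
    (h₀ : b 0 = a 0) (h : ∀ k, b (k + 1) - b k = a (k + 1) + a k) :
    (1 - X) * mk b = (1 + X) * mk a := by
  ext (_ | k)
  · simp [h₀]
  · simp only [sub_mul, add_mul, one_mul, map_sub, map_add, coeff_succ_X_mul, coeff_mk]
    linear_combination h k

theorem mul_mk_eq_of_linear_recurrence {R : Type*} [CommRing R] {c₀ c₁ c₂ : R} {b : ℕ → R}
    (h : ∀ k, b (k + 3) + c₂ * b (k + 2) + c₁ * b (k + 1) + c₀ * b k = 0) :
    (1 + C c₂ * X + C c₁ * X ^ 2 + C c₀ * X ^ 3) * mk b =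
      C (b 0) + C (b 1 + c₂ * b 0) * X + C (b 2 + c₂ * b 1 + c₁ * b 0) * X ^ 2 := by
  have horner_lhs : (1 + C c₂ * X + C c₁ * X ^ 2 + C c₀ * X ^ 3) * mk b =
      mk b + X * (C c₂ * mk b + X * (C c₁ * mk b + X * (C c₀ * mk b))) := by ring
  have horner_rhs :
      C (b 0) + C (b 1 + c₂ * b 0) * X + C (b 2 + c₂ * b 1 + c₁ * b 0) * X ^ 2 =
        C (b 0) + X * (C (b 1 + c₂ * b 0) + X * C (b 2 + c₂ * b 1 + c₁ * b 0)) := by ring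
  rw [horner_lhs, horner_rhs]
  ext (_ | _ | _ | k)
  case succ.succ.succ => simpa [coeff_succ_X_mul, add_assoc] using h k
  all_goals simp [coeff_succ_X_mul, add_assoc]

def rowSeries (n : ℕ) : ℚ⟦X⟧ := mk fun j => (tarr n (j + 1) : ℚ)

theorem one_sub_X_mul_rowSeries_add_two (n : ℕ) :
    (1 - X) * rowSeries (n + 2) = (1 + X) * rowSeries (n + 1) :=
  one_sub_X_mul_mk_eq_one_add_X_mul_mk (by simp [tarr]) fun k => by
    push_cast [tarr]
    ring

theorem rowSeries_one :
    (1 - X) * (1 + 2 * X - X ^ 2) * rowSeries 1 = (1 + X) * (1 - 2 * X - X ^ 2) := by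
  have tail := mul_mk_eq_of_linear_recurrence (c₀ := 1) (c₁ := -3) (c₂ := 1)
    (b := fun k => (gseq (k + 2) : ℚ)) fun k => by simp [gseq]; ring
  norm_num [gseq, map_ofNat C] at tail
  have shift : rowSeries 1 = X * mk (fun k => (gseq (k + 2) : ℚ)) + 1 := by
    rw [eq_X_mul_shift_add_const (rowSeries 1)]
    simp [rowSeries, tarr]
  rw [shift]
  linear_combination X * tail

/-- The generating function of the `n`-th row,
`T_n(y) = Σ_{j≥1} t(n,j) y^(j-1)`, satisfies
`(1-y)^n (1+2y-y²) T_n(y) = (1+y)^n (1-2y-y²)` for every `n ≥ 1`. -/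
theorem row_generating_function (n : ℕ) (hn : 1 ≤ n) :
    (1 - X) ^ n * (1 + 2 * X - X ^ 2) *
        PowerSeries.mk (fun j => (tarr n (j + 1) : ℚ)) =
      (1 + X) ^ n * (1 - 2 * X - X ^ 2) := by
  obtain ⟨m, rfl⟩ := Nat.exists_eq_add_of_le' hn
  change _ * rowSeries (m + 1) = _
  clear hn
  induction m with
  | zero => simpa using rowSeries_one
  | succ m ih =>
    linear_combination (1 - X) ^ (m + 1) * (1 + 2 * X - X ^ 2) *
        one_sub_X_mul_rowSeries_add_two m + (1 + X) * ih
end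

section
/- Let t be the integer array with t(i,1) = 1, t(1,j) = g(j) (where g(1) = 1, g(2) = -2, g(3) = 2, g(4) = -10, and g(j) = -g(j-1) + 3g(j-2) - g(j-3) for j ≥ 5), and t(i,j) = t(i-1,j-1) + t(i-1,j) + t(i,j-1) for i,j ≥ 2. Let A(z) = Σ_{n≥1} t(n,n) z^{n-1} be the generating function of the diagonal entries, viewed as a formal power series over ℚ. Then A satisfies the quadratic equation (1+z)²·A(z)² − (1+z)(3−z)·A(z) + 2 = 0. -/
open PowerSeries

/-!
Write `x` for the outer and `y` for the inner variable of `R⸨X⸩⟦X⟧`. The rows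
`R_i(y) = ∑_j t(i,j) y^j` satisfy `(1 - y) R_{i+1} = (1 + y) R_i`, so
`Ψ = ∑_n x^n y^{-(n+1)} R_{n+1}(y)` satisfies the kernel equation
`(y (1 - y) - x (1 + y)) Ψ = (1 - y) R_1(y)`, and `A` is the constant term of `Ψ` in `y`.
The kernel is `-(y - w)(y - w')`, where `w = x S(x)` (with `S` the large Schröder series) and
`w' = 1 - x - w` are the roots of `W² - (1 - x) W + x`. Expanding `1 / (y - w)` in powers of `y⁻¹`
and `1 / (y - w')` in powers of `y`, partial fractions give `(w - w') A = -L(w)`, where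
`(1 - y) R_1(y) = y L(y)`. As `R_1` is rational, so is `L`, and eliminating `w` gives the quadratic.
-/

noncomputable section

namespace LaurentSeries

variable {R : Type*} [CommRing R]

def constTermY : R⸨X⸩⟦X⟧ →+ R⟦X⟧ where
  toFun F := mk fun n => (coeff n F).coeff 0
  map_zero' := by ext; simp
  map_add' F G := by ext; simp

@[simp]
theorem coeff_constTermY (F : R⸨X⸩⟦X⟧) (n : ℕ) :
    coeff n (constTermY F) = (coeff n F).coeff 0 := by
  simp [constTermY]

theorem constTermY_map_C_mul (p : R⟦X⟧) (F : R⸨X⸩⟦X⟧) :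
    constTermY (map HahnSeries.C p * F) = p * constTermY F := by
  ext n
  simp [coeff_mul, HahnSeries.coeff_sum]

theorem constTermY_map_ofPowerSeries (F : R⟦X⟧⟦X⟧) :
    constTermY (map (HahnSeries.ofPowerSeries ℤ R) F) = map constantCoeff F := by
  ext n
  simpa using coeff_coe_powerSeries (coeff n F) 0

theorem hasSubst_map_C {w : R⟦X⟧} (hw : HasSubst w) :
    HasSubst (map (HahnSeries.C (Γ := ℤ)) w) := by
  show IsNilpotent (MvPowerSeries.constantCoeff (MvPowerSeries.map _ w))
  rw [MvPowerSeries.constantCoeff_map]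
  exact hw.map _

theorem constTermY_subst_map_C {w : R⟦X⟧} (hw : HasSubst w) (G : R⸨X⸩⟦X⟧) :
    constTermY (G.subst (map HahnSeries.C w)) = (constTermY G).subst w := by
  ext n
  rw [coeff_constTermY, coeff_subst' (hasSubst_map_C hw), coeff_subst' hw,
    ← HahnSeries.coeff.addMonoidHom_apply,
    map_finsum _ (coeff_subst_finite' (hasSubst_map_C hw) _ _)]
  simp [← map_pow, mul_comm]

variable (R) in
def unitY : R⸨X⸩ˣ where
  val := HahnSeries.single 1 1
  inv := HahnSeries.single (-1) 1
  val_inv := by simp [HahnSeries.single_mul_single]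
  inv_val := by simp [HahnSeries.single_mul_single]

theorem one_divp_unitY_pow (k : ℕ) :
    (1 /ₚ unitY R ^ k : R⸨X⸩) = HahnSeries.single (-k : ℤ) 1 := by
  rw [one_divp, ← inv_pow, Units.val_pow_eq_pow_val]
  simp [unitY, HahnSeries.single_pow]

theorem constTermY_C_mul_invUnitsSub (f : R⟦X⟧) :
    constTermY (C ((X * f : R⟦X⟧) : R⸨X⸩) * invUnitsSub (unitY R)) = f := by
  ext n
  have h0 : (0 : ℤ) = (n + 1 : ℕ) + -((n + 1 : ℕ) : ℤ) := by omega
  rw [coeff_constTermY, coeff_C_mul, coeff_invUnitsSub, one_divp_unitY_pow, h0,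
    HahnSeries.coeff_mul_single_add, coeff_coe_powerSeries, coeff_succ_X_mul, mul_one]

/- `(invUnitsSub (unitY R)).subst (map HahnSeries.C w)` is `1 / (y - w)` expanded in powers
of `y⁻¹`: the series of `1 / (y - x)` with `w` substituted for `x`. -/
theorem C_X_sub_map_C_mul_subst_invUnitsSub {w : R⟦X⟧} (hw : HasSubst w) :
    (C ((X : R⟦X⟧) : R⸨X⸩) - map HahnSeries.C w) *
      (invUnitsSub (unitY R)).subst (map HahnSeries.C w) = 1 := by
  have h := congrArg (substAlgHom (hasSubst_map_C hw)) (invUnitsSub_mul_sub (unitY R))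
  rw [map_mul, map_sub, map_one, substAlgHom_X, coe_substAlgHom, subst_C] at h
  rw [mul_comm, ← h, coe_X]
  rfl

theorem constTermY_C_mul_subst_invUnitsSub {w : R⟦X⟧} (hw : HasSubst w) (f : R⟦X⟧) :
    constTermY (C ((X * f : R⟦X⟧) : R⸨X⸩) * (invUnitsSub (unitY R)).subst (map HahnSeries.C w)) =
      f.subst w := by
  have hC : C ((X * f : R⟦X⟧) : R⸨X⸩) =
      (C ((X * f : R⟦X⟧) : R⸨X⸩)).subst (map HahnSeries.C w) := (subst_C _).symm
  rw [hC, ← subst_mul (hasSubst_map_C hw), constTermY_subst_map_C hw,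
    constTermY_C_mul_invUnitsSub]

theorem exists_C_X_sub_map_C_mul_eq_one {w : R⟦X⟧} (hw : IsUnit (constantCoeff w)) :
    ∃ Q : R⟦X⟧⟦X⟧, (C X - map C w) * Q = 1 := by
  refine IsUnit.exists_right_inv (isUnit_iff_constantCoeff.mpr ?_)
  rw [map_sub, constantCoeff_C, ← coeff_zero_eq_constantCoeff_apply, coeff_map,
    coeff_zero_eq_constantCoeff, isUnit_iff_constantCoeff]
  simpa using hw.neg

theorem constTermY_C_mul_map_ofPowerSeries (f : R⟦X⟧) (Q : R⟦X⟧⟦X⟧) :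
    constTermY (C ((X * f : R⟦X⟧) : R⸨X⸩) * map (HahnSeries.ofPowerSeries ℤ R) Q) = 0 := by
  rw [← map_C, ← map_mul, constTermY_map_ofPowerSeries, map_mul, map_C]
  simp

theorem map_ofPowerSeries_map_C (w : R⟦X⟧) :
    map (HahnSeries.ofPowerSeries ℤ R) (map C w) = map HahnSeries.C w := by
  rw [← RingHom.comp_apply, ← map_comp]
  congr 2
  exact RingHom.ext HahnSeries.ofPowerSeries_C

/- Of the two partial fractions of `1 / ((y - w)(y - w'))`, only the one expanded in powers of
`y⁻¹` contributes to the constant term in `y`: the other has no negative powers of `y`, and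
`C ↑(X * f)` is divisible by `y`. -/
theorem sub_mul_constTermY_eq_subst {w w' f : R⟦X⟧} {Ψ : R⸨X⸩⟦X⟧} (hw : HasSubst w)
    (hw' : IsUnit (constantCoeff w'))
    (hΨ : (C ((X : R⟦X⟧) : R⸨X⸩) - map HahnSeries.C w) *
      (C ((X : R⟦X⟧) : R⸨X⸩) - map HahnSeries.C w') * Ψ = C ((X * f : R⟦X⟧) : R⸨X⸩)) :
    (w - w') * constTermY Ψ = f.subst w := by
  set P : R⸨X⸩⟦X⟧ := (invUnitsSub (unitY R)).subst (map HahnSeries.C w)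
  obtain ⟨Q, hQ⟩ := exists_C_X_sub_map_C_mul_eq_one hw'
  have hP := C_X_sub_map_C_mul_subst_invUnitsSub hw
  have hP' := congrArg (map (HahnSeries.ofPowerSeries ℤ R)) hQ
  rw [map_mul, map_sub, map_C, map_ofPowerSeries_map_C, map_one] at hP'
  have hsplit : map HahnSeries.C (w - w') * Ψ =
      C ((X * f : R⟦X⟧) : R⸨X⸩) * (P - map (HahnSeries.ofPowerSeries ℤ R) Q) := by
    rw [map_sub]
    linear_combination (-(C ((X : R⟦X⟧) : R⸨X⸩) - map HahnSeries.C w') * Ψ) * hP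
      + ((C ((X : R⟦X⟧) : R⸨X⸩) - map HahnSeries.C w) * Ψ) * hP'
      + (P - map (HahnSeries.ofPowerSeries ℤ R) Q) * hΨ
  have := congrArg constTermY hsplit
  rwa [constTermY_map_C_mul, mul_sub, map_sub, constTermY_C_mul_subst_invUnitsSub hw,
    constTermY_C_mul_map_ofPowerSeries, sub_zero] at this

theorem coe_X_mul_single_neg_succ (k : ℕ) :
    ((X : R⟦X⟧) : R⸨X⸩) * HahnSeries.single (-(k + 1 : ℕ) : ℤ) 1 =
      HahnSeries.single (-k : ℤ) 1 := by
  rw [coe_X, HahnSeries.single_mul_single, mul_one,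
    show (1 : ℤ) + -(k + 1 : ℕ) = -k by omega]

theorem kernel_factorization {w : R⟦X⟧} (hw : w ^ 2 - (1 - X) * w + X = 0) :
    (C ((X : R⟦X⟧) : R⸨X⸩) - map HahnSeries.C w) *
      (C ((X : R⟦X⟧) : R⸨X⸩) - map HahnSeries.C (1 - X - w)) =
        -(C ((X : R⟦X⟧) : R⸨X⸩) * (1 - C ((X : R⟦X⟧) : R⸨X⸩)) -
          X * (1 + C ((X : R⟦X⟧) : R⸨X⸩))) := by
  have hW := congrArg (map (HahnSeries.C (Γ := ℤ) (R := R))) hw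
  simp only [map_add, map_sub, map_mul, map_pow, map_one, map_X, map_zero] at hW
  rw [map_sub (map _), map_sub (map _), map_one, map_X]
  linear_combination -hW

end LaurentSeries

section SchroderRoot

variable (R : Type*) [CommRing R]

def schroderRoot : R⟦X⟧ := X * map (Nat.castRingHom R) largeSchroderSeries

theorem schroderRoot_sq_sub : schroderRoot R ^ 2 - (1 - X) * schroderRoot R + X = 0 := by
  have h := congrArg (map (Nat.castRingHom R))
    largeSchroderSeries_eq_one_add_X_mul_largeSchroderSeries_add_X_mul_largeSchroderSeries_sq
  simp only [map_add, map_mul, map_pow, map_one, map_X] at h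
  rw [schroderRoot]
  linear_combination (-X) * h

theorem constantCoeff_schroderRoot : constantCoeff (schroderRoot R) = 0 := by
  simp [schroderRoot]

end SchroderRoot

theorem quadratic_of_kernel_root {R : Type*} [CommRing R] [IsDomain R] {x w a ℓ : R}
    (hw : w ^ 2 - (1 - x) * w + x = 0) (hw₁ : 1 + w ≠ 0) (hu : w - (1 - x - w) ≠ 0)
    (hℓ : ℓ * (w ^ 2 - 2 * w - 1) = (1 + w) * (w ^ 2 + 2 * w - 1))
    (ha : (w - (1 - x - w)) * a = -ℓ) :
    (1 + x) ^ 2 * a ^ 2 - (1 + x) * (3 - x) * a + 2 = 0 := by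
  have hℓ' : (1 + x) * ℓ = (1 + x) - (3 - x) * w :=
    mul_left_cancel₀ hw₁ (by linear_combination -hℓ + (ℓ - 1 - w) * hw)
  have h : ((1 + x) ^ 2 * a ^ 2 - (1 + x) * (3 - x) * a + 2) * (w - (1 - x - w)) ^ 2 = 0 := by
    linear_combination ((1 + x) * a * (w - (1 - x - w)) + ((3 - x) * w - (1 + x))
      - (3 - x) * (w - (1 - x - w))) * ((1 + x) * ha - hℓ') + (8 - (3 - x) ^ 2) * hw
  exact (mul_eq_zero.mp h).resolve_right (pow_ne_zero 2 hu)

namespace DiagonalArray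

open LaurentSeries

def row (i : ℕ) : ℚ⟦X⟧ := mk fun j => (tarr i j : ℚ)

theorem row_one : row 1 = mk fun j => (gseq j : ℚ) := by
  ext (_ | _ | j) <;> simp [row, tarr, gseq]

theorem one_sub_X_mul_row_add_two (i : ℕ) :
    (1 - X) * row (i + 2) = (1 + X) * row (i + 1) := by
  ext (_ | _ | j)
  · simp [row, tarr]
  · simp [sub_mul, add_mul, coeff_succ_X_mul, row, tarr]
  · simp only [sub_mul, add_mul, one_mul, map_sub, map_add, coeff_succ_X_mul, row, coeff_mk]
    rw [tarr]
    push_cast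
    ring

theorem mul_mk_gseq : (1 + X - 3 * X ^ 2 + X ^ 3) * (mk fun j => (gseq j : ℚ)) =
    X - X ^ 2 - 3 * X ^ 3 - X ^ 4 := by
  rw [show (3 : ℚ⟦X⟧) = C 3 from (map_ofNat C 3).symm]
  ext (_ | _ | _ | _ | _ | j) <;>
    simp [add_mul, sub_mul, mul_assoc, coeff_X_pow_mul', coeff_X_pow, coeff_X, gseq] <;> ring

theorem exists_one_sub_X_mul_row_one_eq_X_mul :
    ∃ L : ℚ⟦X⟧, (1 - X) * row 1 = X * L ∧
      L * (X ^ 2 - 2 * X - 1) = (1 + X) * (X ^ 2 + 2 * X - 1) := by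
  obtain ⟨L, hL⟩ : X ∣ (1 - X) * row 1 := X_dvd_iff.mpr (by simp [row, tarr])
  refine ⟨L, hL, mul_left_cancel₀ X_ne_zero ?_⟩
  have hG := mul_mk_gseq
  rw [← row_one] at hG
  linear_combination (-(X ^ 2 - 2 * X - 1)) * hL - hG

def shiftedRows : ℚ⸨X⸩⟦X⟧ :=
  mk fun n => HahnSeries.single (-(n + 1 : ℕ) : ℤ) 1 * (row (n + 1) : ℚ⸨X⸩)

theorem constTermY_shiftedRows :
    constTermY shiftedRows = mk fun n => (tarr (n + 1) (n + 1) : ℚ) := by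
  ext n
  have h0 : (0 : ℤ) = (n + 1 : ℕ) + -((n + 1 : ℕ) : ℤ) := by omega
  rw [coeff_constTermY, shiftedRows, coeff_mk, coeff_mk, h0, HahnSeries.coeff_single_mul_add,
    one_mul, coeff_coe_powerSeries, row, coeff_mk]

theorem kernel_mul_shiftedRows :
    (C ((X : ℚ⟦X⟧) : ℚ⸨X⸩) * (1 - C ((X : ℚ⟦X⟧) : ℚ⸨X⸩)) -
      X * (1 + C ((X : ℚ⟦X⟧) : ℚ⸨X⸩))) * shiftedRows = C (((1 - X) * row 1 : ℚ⟦X⟧) : ℚ⸨X⸩) := by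
  set y : ℚ⸨X⸩ := ((X : ℚ⟦X⟧) : ℚ⸨X⸩)
  rw [← map_one C, ← map_sub, ← map_add, ← map_mul, sub_mul, mul_assoc]
  refine PowerSeries.ext fun n ↦ ?_
  rcases n with _ | n
  · have h := coe_X_mul_single_neg_succ (R := ℚ) 0
    rw [Nat.cast_zero, neg_zero, HahnSeries.single_zero_one] at h
    simp only [map_sub, coeff_C_mul, coeff_zero_X_mul, coeff_zero_C, shiftedRows, coeff_mk,
      sub_zero, coe_mul, coe_one]
    linear_combination (1 - y) * ((row 1 : ℚ⟦X⟧) : ℚ⸨X⸩) * h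
  · have h := congrArg (HahnSeries.ofPowerSeries ℤ ℚ) (one_sub_X_mul_row_add_two n)
    simp only [coe_mul, coe_sub, coe_add, coe_one] at h
    simp only [map_sub, coeff_C_mul, coeff_succ_X_mul, coeff_C, shiftedRows, coeff_mk,
      if_neg n.succ_ne_zero]
    linear_combination (1 - y) * ((row (n + 2) : ℚ⟦X⟧) : ℚ⸨X⸩) *
      coe_X_mul_single_neg_succ (R := ℚ) (n + 1) + HahnSeries.single (-(n + 1 : ℕ) : ℤ) (1 : ℚ) * h

end DiagonalArray

end

open LaurentSeries DiagonalArray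

/-- The generating function `A(z) = Σ_{n≥1} t(n,n) z^(n-1)` of the diagonal
entries satisfies `(1+z)² A(z)² − (1+z)(3−z) A(z) + 2 = 0`. -/
theorem diag_generating_function_quadratic :
    letI A : PowerSeries ℚ := PowerSeries.mk (fun n => (tarr (n + 1) (n + 1) : ℚ))
    (1 + X) ^ 2 * A ^ 2 - (1 + X) * (3 - X) * A + 2 = 0 := by
  set w := schroderRoot ℚ
  have hw : w ^ 2 - (1 - X) * w + X = 0 := schroderRoot_sq_sub ℚ
  have hw₀ : constantCoeff w = 0 := constantCoeff_schroderRoot ℚ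
  have hsubst : HasSubst w := HasSubst.of_constantCoeff_zero' hw₀
  obtain ⟨L, hK, hL⟩ := exists_one_sub_X_mul_row_one_eq_X_mul
  have hkernel : (C ((X : ℚ⟦X⟧) : ℚ⸨X⸩) - map HahnSeries.C w) *
      (C ((X : ℚ⟦X⟧) : ℚ⸨X⸩) - map HahnSeries.C (1 - X - w)) * shiftedRows =
        C ((X * -L : ℚ⟦X⟧) : ℚ⸨X⸩) := by
    rw [kernel_factorization hw, neg_mul, kernel_mul_shiftedRows, hK, mul_neg, coe_neg, map_neg]
  have hA := sub_mul_constTermY_eq_subst hsubst (by simp [hw₀]) hkernel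
  rw [constTermY_shiftedRows, ← coe_substAlgHom hsubst, map_neg] at hA
  have hℓ := congrArg (substAlgHom hsubst) hL
  simp only [map_mul, map_sub, map_add, map_pow, map_one, map_ofNat, substAlgHom_X] at hℓ
  refine quadratic_of_kernel_root hw ?_ ?_ hℓ hA <;>
    exact fun h ↦ by simpa [hw₀] using congrArg constantCoeff h
end
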